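/- arXiv:1001.0890 — 2 statements merged into one kernel-verified Lean document; each statement's English description precedes it below -/
import Mathlib

section
/- Let $S$ be a path-connected open subset of the plane, and let $u, v \in S$ be points with rational coordinates. Then there exists a polygonal line from $u$ to $v$, contained in $S$, all of whose vertices have rational coordinates. -/
/-!
Call `p` good if every point of `V` close enough to `p` can be reached from `u` by a polygonal
line in `S` with vertices in `V`. Balls are convex, so as soon as one point of `V` in a ball
inside `S` is reachable, all points of `V` in that ball are. Hence the good points form an open
set which, by density of `V`, contains every point of `S` in its closure. It contains `u`, so by
connectedness it contains all of `S`, in particular `v`.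
-/

/-- A point of the plane has rational coordinates. -/
def IsRatPt (p : EuclideanSpace ℝ (Fin 2)) : Prop :=
  (∃ a : ℚ, p 0 = (a : ℝ)) ∧ (∃ b : ℚ, p 1 = (b : ℝ))

open Set Metric Filter Topology

section Polygonal

variable {E : Type*} [NormedAddCommGroup E] [NormedSpace ℝ E]

def PolygonalJoinedIn (S V : Set E) (u v : E) : Prop :=
  ∃ (k : ℕ) (W : Fin (k + 1) → E), W 0 = u ∧ W (Fin.last k) = v ∧ (∀ i, W i ∈ V) ∧
    ∀ i : Fin k, segment ℝ (W i.castSucc) (W i.succ) ⊆ S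

namespace PolygonalJoinedIn

variable {S V : Set E} {u w z : E}

theorem refl (hu : u ∈ V) : PolygonalJoinedIn S V u u :=
  ⟨0, fun _ ↦ u, rfl, rfl, fun _ ↦ hu, fun i ↦ i.elim0⟩

theorem snoc (h : PolygonalJoinedIn S V u w) (hz : z ∈ V) (hwz : segment ℝ w z ⊆ S) :
    PolygonalJoinedIn S V u z := by
  obtain ⟨k, W, hW0, hWk, hWV, hWS⟩ := h
  refine ⟨k + 1, Fin.snoc W z, ?_, Fin.snoc_last .., ?_, ?_⟩
  · simpa using hW0
  · refine Fin.lastCases ?_ fun i ↦ ?_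
    · simpa using hz
    · simpa using hWV i
  · refine Fin.lastCases ?_ fun i ↦ ?_
    · simpa [hWk] using hwz
    · simpa only [Fin.succ_castSucc, Fin.snoc_castSucc] using hWS i

theorem snoc_of_convex {K : Set E} (hK : Convex ℝ K) (hKS : K ⊆ S)
    (h : PolygonalJoinedIn S V u w) (hw : w ∈ K) (hz : z ∈ K) (hzV : z ∈ V) :
    PolygonalJoinedIn S V u z :=
  h.snoc hzV ((hK.segment_subset hw hz).trans hKS)

end PolygonalJoinedIn

theorem IsPreconnected.polygonalJoinedIn {S V : Set E} (hconn : IsPreconnected S)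
    (hS : IsOpen S) (hV : Dense V) {u v : E} (hu : u ∈ S) (huV : u ∈ V) (hv : v ∈ S)
    (hvV : v ∈ V) : PolygonalJoinedIn S V u v := by
  set T := {p | ∀ᶠ z in 𝓝 p, z ∈ V → PolygonalJoinedIn S V u z}
  have mem_T : ∀ c r, ball c r ⊆ S → ∀ w ∈ ball c r, PolygonalJoinedIn S V u w → c ∈ T :=
    fun c r hcS w hw hwu ↦ eventually_of_mem (ball_mem_nhds c (pos_of_mem_ball hw))
      fun z hz hzV ↦ hwu.snoc_of_convex (convex_ball c r) hcS hw hz hzV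
  have hu_T : u ∈ T := by
    obtain ⟨r, hr, hrS⟩ := isOpen_iff.mp hS u hu
    exact mem_T u r hrS u (mem_ball_self hr) (.refl huV)
  have hT_closed : closure T ∩ S ⊆ T := by
    rintro p ⟨hpT, hpS⟩
    obtain ⟨r, hr, hrS⟩ := isOpen_iff.mp hS p hpS
    obtain ⟨q, hqr, hqT⟩ := mem_closure_iff_nhds.mp hpT _ (ball_mem_nhds p hr)
    obtain ⟨w, hwV, hwr, hw⟩ :=
      hV.inter_nhds_nonempty (inter_mem (isOpen_ball.mem_nhds hqr) hqT)
    exact mem_T p r hrS w hwr (hw hwV)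
  have hS_T : S ⊆ T :=
    hconn.subset_of_closure_inter_subset isOpen_setOfPred_eventually_nhds ⟨u, hu, hu_T⟩ hT_closed
  exact (hS_T hv).self_of_nhds hvV

end Polygonal

theorem dense_setOf_isRatPt : Dense {p | IsRatPt p} := by
  refine ((dense_pi univ fun _ _ ↦ Rat.denseRange_cast (𝕜 := ℝ)).preimage
    (PiLp.homeomorph 2 _).isOpenMap).mono fun p hp ↦ ?_
  exact ⟨(hp 0 trivial).imp fun _ ↦ Eq.symm, (hp 1 trivial).imp fun _ ↦ Eq.symm⟩

theorem stmt2 (S : Set (EuclideanSpace ℝ (Fin 2))) (hopen : IsOpen S)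
    (hconn : IsPathConnected S) (u v : EuclideanSpace ℝ (Fin 2))
    (hu : u ∈ S) (hv : v ∈ S) (hur : IsRatPt u) (hvr : IsRatPt v) :
    ∃ (k : ℕ) (W : Fin (k + 1) → EuclideanSpace ℝ (Fin 2)),
      W 0 = u ∧ W (Fin.last k) = v ∧ (∀ i, IsRatPt (W i)) ∧
      ∀ i : Fin k, segment ℝ (W i.castSucc) (W i.succ) ⊆ S :=
  hconn.isConnected.isPreconnected.polygonalJoinedIn hopen dense_setOf_isRatPt hu hur hv hvr
end

section
/- Fix two sequences of vectors $(e_i)_{i \ge 1}$ and $(f_j)_{j \ge 1}$ in $\mathbb{R}^2$ defining polygonal routes: route $R$ starts at a fixed point $v$ with consecutive segments $e_1, e_2, \dots$, and route $R_2(w)$ starts at $w$ with consecutive segments $f_1, f_2, \dots$. Then there exists a point $w^*$ such that the routes $R$ and $R_2(w^*)$ are almost disjoint: every vertex of $R$ lies outside every segment of $R_2(w^*)$ and every vertex of $R_2(w^*)$ lies outside every segment of $R$. -/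
/-!
A segment in the plane is Lebesgue-null, and for fixed `i`, `j` each of the two bad events
"vertex `i` of `R` lies on segment `j` of `R₂(w)`" and "vertex `j` of `R₂(w)` lies on segment `i`
of `R`" confines the translation `w` to a segment. Countably many null sets cannot cover the
plane, so almost every `w` works.
-/

open MeasureTheory

theorem MeasureTheory.Measure.addHaar_segment {E : Type*} [NormedAddCommGroup E]
    [NormedSpace ℝ E] [MeasurableSpace E] [BorelSpace E] [FiniteDimensional ℝ E] (μ : Measure E)
    [μ.IsAddHaarMeasure] (hE : 1 < Module.finrank ℝ E) (a b : E) : μ (segment ℝ a b) = 0 := by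
  have hline : affineSpan ℝ {a, b} ≠ ⊤ := fun h => by
    have := (collinear_pair ℝ a b).finrank_le_one
    rw [← direction_affineSpan, h, AffineSubspace.direction_top, finrank_top] at this
    omega
  refine measure_mono_null ?_ (Measure.addHaar_affineSubspace μ _ hline)
  rw [← convexHull_pair]
  exact convexHull_subset_affineSpan _

section Segment

variable {E : Type*} [AddCommGroup E] [Module ℝ E]

theorem mem_segment_add_iff (x w a b : E) :
    x ∈ segment ℝ (w + a) (w + b) ↔ w ∈ segment ℝ (x - a) (x - b) := by
  constructor <;> rintro ⟨s, t, hs, ht, hst, h⟩ <;> refine ⟨s, t, hs, ht, hst, ?_⟩ <;>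
    · obtain rfl : t = 1 - s := by linarith
      rw [← h]
      module

theorem add_mem_segment_iff (w c x y : E) :
    w + c ∈ segment ℝ x y ↔ w ∈ segment ℝ (x - c) (y - c) := by
  rw [← mem_segment_translate ℝ (-c)]
  simp only [neg_add_eq_sub, add_sub_cancel_right]

end Segment

/-- The `m`-th vertex of the polygonal route starting at `p` with segment vectors `g`. -/
noncomputable def routeVertex (p : EuclideanSpace ℝ (Fin 2)) (g : ℕ → EuclideanSpace ℝ (Fin 2))
    (m : ℕ) : EuclideanSpace ℝ (Fin 2) :=
  p + ∑ k ∈ Finset.range m, g k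

theorem routeVertex_eq_add_routeVertex_zero (p : EuclideanSpace ℝ (Fin 2))
    (g : ℕ → EuclideanSpace ℝ (Fin 2)) (m : ℕ) : routeVertex p g m = p + routeVertex 0 g m := by
  simp only [routeVertex, zero_add]

theorem stmt8 (v : EuclideanSpace ℝ (Fin 2)) (e f : ℕ → EuclideanSpace ℝ (Fin 2)) :
    ∃ w : EuclideanSpace ℝ (Fin 2), ∀ i j : ℕ,
      routeVertex v e i ∉ segment ℝ (routeVertex w f j) (routeVertex w f (j + 1)) ∧
      routeVertex w f j ∉ segment ℝ (routeVertex v e i) (routeVertex v e (i + 1)) := by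
  have hnull (a b : EuclideanSpace ℝ (Fin 2)) : ∀ᵐ w, w ∉ segment ℝ a b :=
    measure_eq_zero_iff_ae_notMem.mp (volume.addHaar_segment (by simp) a b)
  refine Filter.Eventually.exists (f := ae volume) ?_
  simp only [ae_all_iff, Filter.eventually_and]
  intro i j
  set c := routeVertex 0 f
  constructor
  · filter_upwards [hnull (routeVertex v e i - c j) (routeVertex v e i - c (j + 1))] with w hw
    rwa [routeVertex_eq_add_routeVertex_zero w, routeVertex_eq_add_routeVertex_zero w,
      mem_segment_add_iff]
  · filter_upwards [hnull (routeVertex v e i - c j) (routeVertex v e (i + 1) - c j)] with w hw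
    rwa [routeVertex_eq_add_routeVertex_zero w, add_mem_segment_iff]
end
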